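/- Let X be a real normed space, α, β ∈ [0,1) with 0 < α+β < 1, and suppose a nonzero bounded linear operator T : X → Y preserves ρ_{α,β}-orthogonality (ρ_{α,β}(u,v) = 0 implies ρ_{α,β}(Tu,Tv) = 0). Then T is injective. -/

import Mathlib

noncomputable def rhoP {X : Type*} [NormedAddCommGroup X] [NormedSpace ℝ X] (u v : X) : ℝ :=
  Filter.limUnder (nhdsWithin (0:ℝ) (Set.Ioi 0)) (fun t : ℝ => (‖u + t • v‖^2 - ‖u‖^2) / (2*t))

noncomputable def rhoM {X : Type*} [NormedAddCommGroup X] [NormedSpace ℝ X] (u v : X) : ℝ :=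
  Filter.limUnder (nhdsWithin (0:ℝ) (Set.Iio 0)) (fun t : ℝ => (‖u + t • v‖^2 - ‖u‖^2) / (2*t))

noncomputable def rhoAB {X : Type*} [NormedAddCommGroup X] [NormedSpace ℝ X]
    (α β : ℝ) (u v : X) : ℝ := α * rhoM u v + β * rhoP u v

/-!
Suppose `T x = 0` with `x ≠ 0`, pick `y` with `T y ≠ 0` and put `u = y + t x`, so `T u = T y`.
Since `ρ_{α,β}(u, s u + x) = s (α + β) ‖u‖² + ρ_{α,β}(u, x)`, a suitable `s` makes `s u + x`
orthogonal to `u`; its image `s T u` is orthogonal to `T u` only for `s = 0`, so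
`ρ_{α,β}(u, x) = 0`. On the other hand `τ ↦ ‖y + τ x‖²` is convex, so its one-sided derivatives
at `τ = t` dominate the secant slope over `[0, t]`, which is positive once `t ‖x‖ > 2 ‖y‖`;
as `ρ₋ ≤ ρ₊` and `β ≥ 0`, this gives `ρ_{α,β}(u, x) ≥ (α + β) ρ₋(u, x) > 0`.
-/

open Filter Set Topology

section Rho

variable {X : Type*} [NormedAddCommGroup X] [NormedSpace ℝ X]

noncomputable def rhoQuot (u v : X) (t : ℝ) : ℝ := (‖u + t • v‖ ^ 2 - ‖u‖ ^ 2) / (2 * t)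

lemma convexOn_norm_add_smul_sq (u v : X) :
    ConvexOn ℝ univ (fun t : ℝ => ‖u + t • v‖ ^ 2) := by
  have hline : ConvexOn ℝ univ (fun t : ℝ => ‖u + t • v‖) := by
    have hcomp : (fun t : ℝ => ‖u + t • v‖) = norm ∘ AffineMap.lineMap u (u + v) := by
      ext t
      simp [AffineMap.lineMap_apply, add_comm]
    simpa [hcomp] using convexOn_univ_norm.comp_affineMap (AffineMap.lineMap u (u + v))
  exact hline.pow (fun _ _ => norm_nonneg _) 2

lemma rhoQuot_eq_slope (u v : X) :
    rhoQuot u v = fun t => slope (fun τ : ℝ => ‖u + τ • v‖ ^ 2) 0 t / 2 := by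
  ext t
  simp [rhoQuot, slope_def_field, div_div, mul_comm]

lemma tendsto_rhoQuot_rightDeriv (u v : X) :
    Tendsto (rhoQuot u v) (𝓝[>] 0)
      (𝓝 (derivWithin (fun t : ℝ => ‖u + t • v‖ ^ 2) (Ioi 0) 0 / 2)) := by
  have h := (convexOn_norm_add_smul_sq u v).hasDerivWithinAt_rightDeriv_of_mem_interior
    (x := 0) (by simp)
  rw [hasDerivWithinAt_iff_tendsto_slope' self_notMem_Ioi] at h
  rw [rhoQuot_eq_slope]
  exact h.div_const 2

lemma tendsto_rhoQuot_leftDeriv (u v : X) :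
    Tendsto (rhoQuot u v) (𝓝[<] 0)
      (𝓝 (derivWithin (fun t : ℝ => ‖u + t • v‖ ^ 2) (Iio 0) 0 / 2)) := by
  have h := (convexOn_norm_add_smul_sq u v).hasDerivWithinAt_leftDeriv_of_mem_interior
    (x := 0) (by simp)
  rw [hasDerivWithinAt_iff_tendsto_slope' self_notMem_Iio] at h
  rw [rhoQuot_eq_slope]
  exact h.div_const 2

lemma rhoP_eq_rightDeriv (u v : X) :
    rhoP u v = derivWithin (fun t : ℝ => ‖u + t • v‖ ^ 2) (Ioi 0) 0 / 2 :=
  (tendsto_rhoQuot_rightDeriv u v).limUnder_eq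

lemma rhoM_eq_leftDeriv (u v : X) :
    rhoM u v = derivWithin (fun t : ℝ => ‖u + t • v‖ ^ 2) (Iio 0) 0 / 2 :=
  (tendsto_rhoQuot_leftDeriv u v).limUnder_eq

lemma tendsto_rhoP (u v : X) : Tendsto (rhoQuot u v) (𝓝[>] 0) (𝓝 (rhoP u v)) :=
  rhoP_eq_rightDeriv u v ▸ tendsto_rhoQuot_rightDeriv u v

lemma tendsto_rhoM (u v : X) : Tendsto (rhoQuot u v) (𝓝[<] 0) (𝓝 (rhoM u v)) :=
  rhoM_eq_leftDeriv u v ▸ tendsto_rhoQuot_leftDeriv u v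

lemma rhoM_le_rhoP (u v : X) : rhoM u v ≤ rhoP u v := by
  rw [rhoM_eq_leftDeriv, rhoP_eq_rightDeriv]
  gcongr
  exact (convexOn_norm_add_smul_sq u v).leftDeriv_le_rightDeriv_of_mem_interior (by simp)

lemma rhoQuot_le_rhoM (u v : X) {t : ℝ} (ht : t < 0) : rhoQuot u v t ≤ rhoM u v := by
  rw [rhoQuot_eq_slope, rhoM_eq_leftDeriv]
  dsimp only
  rw [slope_comm]
  gcongr
  exact (convexOn_norm_add_smul_sq u v).slope_le_leftDeriv_of_mem_interior
    (mem_univ _) (by simp) ht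

lemma rhoP_zero_right (u : X) : rhoP u 0 = 0 := by
  simp [rhoP_eq_rightDeriv]

lemma rhoM_zero_right (u : X) : rhoM u 0 = 0 := by
  simp [rhoM_eq_leftDeriv]

lemma rhoQuot_smul_add (u v : X) (s : ℝ) {t : ℝ} (ht : t ≠ 0) (hts : 0 < 1 + t * s) :
    rhoQuot u (s • u + v) t
      = (1 + t * s) * rhoQuot u v (t / (1 + t * s)) + (s + t * s ^ 2 / 2) * ‖u‖ ^ 2 := by
  have hvec : u + t • (s • u + v) = (1 + t * s) • (u + (t / (1 + t * s)) • v) := by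
    rw [smul_add, smul_smul, smul_add, smul_smul, mul_div_cancel₀ _ hts.ne', add_smul, one_smul]
    abel
  rw [rhoQuot, rhoQuot, hvec, norm_smul, Real.norm_eq_abs, abs_of_pos hts, mul_pow]
  field_simp
  ring

lemma tendsto_rhoQuot_smul_add {S : Set ℝ} (hS₀ : (0 : ℝ) ∉ S)
    (hS : ∀ t ∈ S, ∀ c : ℝ, 0 < c → c * t ∈ S) {u v : X} {r : ℝ}
    (h : Tendsto (rhoQuot u v) (𝓝[S] 0) (𝓝 r)) (s : ℝ) :
    Tendsto (rhoQuot u (s • u + v)) (𝓝[S] 0) (𝓝 (s * ‖u‖ ^ 2 + r)) := by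
  have hscale : Tendsto (fun t : ℝ => 1 + t * s) (𝓝[S] 0) (𝓝 1) := by
    have h : ContinuousAt (fun t : ℝ => 1 + t * s) 0 := by fun_prop
    simpa using h.tendsto.mono_left nhdsWithin_le_nhds
  have hpos : ∀ᶠ t in 𝓝[S] 0, 0 < 1 + t * s := hscale.eventually (eventually_gt_nhds one_pos)
  have hreparam : Tendsto (fun t : ℝ => t / (1 + t * s)) (𝓝[S] 0) (𝓝[S] 0) := by
    refine tendsto_nhdsWithin_iff.2 ⟨?_, ?_⟩
    · have h : ContinuousAt (fun t : ℝ => t / (1 + t * s)) 0 := by fun_prop (disch := norm_num)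
      simpa using h.tendsto.mono_left nhdsWithin_le_nhds
    · filter_upwards [hpos, self_mem_nhdsWithin] with t h1 ht
      rw [div_eq_inv_mul]
      exact hS t ht _ (inv_pos.2 h1)
  have hquad : Tendsto (fun t : ℝ => (s + t * s ^ 2 / 2) * ‖u‖ ^ 2) (𝓝[S] 0) (𝓝 (s * ‖u‖ ^ 2)) := by
    have h : ContinuousAt (fun t : ℝ => (s + t * s ^ 2 / 2) * ‖u‖ ^ 2) 0 := by fun_prop
    simpa using h.tendsto.mono_left nhdsWithin_le_nhds
  have hlim := (hscale.mul (h.comp hreparam)).add hquad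
  rw [one_mul, add_comm r] at hlim
  refine hlim.congr' ?_
  filter_upwards [hpos, self_mem_nhdsWithin] with t h1 ht
  exact (rhoQuot_smul_add u v s (ne_of_mem_of_not_mem ht hS₀) h1).symm

lemma rhoP_smul_add (u v : X) (s : ℝ) : rhoP u (s • u + v) = s * ‖u‖ ^ 2 + rhoP u v :=
  (tendsto_rhoQuot_smul_add self_notMem_Ioi
    (fun _ ht _ hc => mul_pos hc ht) (tendsto_rhoP u v) s).limUnder_eq

lemma rhoM_smul_add (u v : X) (s : ℝ) : rhoM u (s • u + v) = s * ‖u‖ ^ 2 + rhoM u v :=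
  (tendsto_rhoQuot_smul_add self_notMem_Iio
    (fun _ ht _ hc => mul_neg_of_pos_of_neg hc ht) (tendsto_rhoM u v) s).limUnder_eq

end Rho

section RhoAB

variable {X : Type*} [NormedAddCommGroup X] [NormedSpace ℝ X] {α β : ℝ}

lemma rhoAB_smul_add (u v : X) (s : ℝ) :
    rhoAB α β u (s • u + v) = s * (α + β) * ‖u‖ ^ 2 + rhoAB α β u v := by
  rw [rhoAB, rhoAB, rhoP_smul_add, rhoM_smul_add]
  ring

lemma rhoAB_smul_self (u : X) (s : ℝ) : rhoAB α β u (s • u) = s * (α + β) * ‖u‖ ^ 2 := by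
  simpa [rhoAB, rhoP_zero_right, rhoM_zero_right] using rhoAB_smul_add (α := α) (β := β) u 0 s

lemma add_mul_rhoM_le_rhoAB (hβ : 0 ≤ β) (u v : X) :
    (α + β) * rhoM u v ≤ rhoAB α β u v := by
  have := mul_le_mul_of_nonneg_left (rhoM_le_rhoP u v) hβ
  rw [rhoAB]
  linarith

lemma exists_norm_lt_norm_add_smul (y : X) {x : X} (hx : x ≠ 0) :
    ∃ t : ℝ, 0 < t ∧ ‖y‖ < ‖y + t • x‖ := by
  have hx' : 0 < ‖x‖ := norm_pos_iff.2 hx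
  set t := (2 * ‖y‖ + 1) / ‖x‖
  refine ⟨t, by positivity, ?_⟩
  have h := norm_sub_le (y + t • x) y
  rw [add_sub_cancel_left, norm_smul, Real.norm_of_nonneg (by positivity),
    div_mul_cancel₀ _ hx'.ne'] at h
  linarith

lemma exists_rhoAB_add_smul_pos (hβ : 0 ≤ β) (hab : 0 < α + β) (y : X) {x : X}
    (hx : x ≠ 0) : ∃ t : ℝ, 0 < rhoAB α β (y + t • x) x := by
  obtain ⟨t, ht, hlt⟩ := exists_norm_lt_norm_add_smul y hx
  refine ⟨t, lt_of_lt_of_le ?_ (add_mul_rhoM_le_rhoAB hβ _ _)⟩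
  have hsecant : 0 < rhoQuot (y + t • x) x (-t) := by
    rw [rhoQuot, neg_smul, add_neg_cancel_right]
    apply div_pos_of_neg_of_neg _ (by linarith)
    nlinarith [norm_nonneg y]
  exact mul_pos hab (hsecant.trans_le (rhoQuot_le_rhoM _ _ (neg_neg_of_pos ht)))

lemma rhoAB_eq_zero_of_map_eq_zero {Y : Type*} [NormedAddCommGroup Y] [NormedSpace ℝ Y]
    (hab : α + β ≠ 0) (T : X →ₗ[ℝ] Y)
    (hpres : ∀ u v : X, rhoAB α β u v = 0 → rhoAB α β (T u) (T v) = 0)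
    {u x : X} (hu : T u ≠ 0) (hx : T x = 0) : rhoAB α β u x = 0 := by
  have hu₀ : ‖u‖ ≠ 0 := norm_ne_zero_iff.2 fun h => hu (by rw [h, map_zero])
  set s := -rhoAB α β u x / ((α + β) * ‖u‖ ^ 2)
  have horth : rhoAB α β u (s • u + x) = 0 := by
    rw [rhoAB_smul_add, div_mul_eq_mul_div, div_mul_eq_mul_div, div_add' _ _ _ (by positivity)]
    ring_nf
  have himage := hpres _ _ horth
  rw [map_add, map_smul, hx, add_zero, rhoAB_smul_self] at himage
  have hs : s = 0 := by simpa [hab, hu] using himage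
  simpa [s, hab, hu₀] using hs

end RhoAB

theorem stmt_15_general {X Y : Type*} [NormedAddCommGroup X] [NormedSpace ℝ X]
    [NormedAddCommGroup Y] [NormedSpace ℝ Y]
    (α β : ℝ) (hβ : β ∈ Set.Ico (0:ℝ) 1)
    (hab : 0 < α + β)
    (T : X →L[ℝ] Y) (hT : T ≠ 0)
    (hpres : ∀ u v : X, rhoAB α β u v = 0 → rhoAB α β (T u) (T v) = 0) :
    Function.Injective T := by
  rw [injective_iff_map_eq_zero]
  intro x hx
  by_contra hx₀
  obtain ⟨y, hy⟩ : ∃ y, T y ≠ 0 := by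
    by_contra! h
    exact hT (ContinuousLinearMap.ext h)
  obtain ⟨t, ht⟩ := exists_rhoAB_add_smul_pos hβ.1 hab y hx₀
  have hTu : T (y + t • x) ≠ 0 := by simpa [hx] using hy
  exact ht.ne' (rhoAB_eq_zero_of_map_eq_zero hab.ne' T.toLinearMap hpres hTu hx)

theorem stmt_15 {X Y : Type*} [NormedAddCommGroup X] [NormedSpace ℝ X]
    [NormedAddCommGroup Y] [NormedSpace ℝ Y]
    (α β : ℝ) (hα : α ∈ Set.Ico (0:ℝ) 1) (hβ : β ∈ Set.Ico (0:ℝ) 1)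
    (hab : 0 < α + β) (hab1 : α + β < 1)
    (T : X →L[ℝ] Y) (hT : T ≠ 0)
    (hpres : ∀ u v : X, rhoAB α β u v = 0 → rhoAB α β (T u) (T v) = 0) :
    Function.Injective T :=
  stmt_15_general α β hβ hab T hT hpres
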